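/- arXiv:2410.07986 — 4 statements merged into one kernel-verified Lean document; each statement's English description precedes it below -/
import Mathlib

section
/- Let O be a t×t binary matrix over F_2 with O^T O = I, and let S be a subset of {1,...,t} with complement S̄. Then the kernel of the principal submatrix O_{S,S} has the same dimension as the kernel of the principal submatrix O_{S̄,S̄}. -/
open scoped Classical
open Matrix

private lemma orth_entry {t : ℕ} (O : Matrix (Fin t) (Fin t) (ZMod 2)) (hO : Oᵀ * O = 1)
    (j i : Fin t) : ∑ k, O k j * O k i = if j = i then 1 else 0 := by
  have h := congrFun (congrFun hO j) i
  simpa [Matrix.mul_apply, Matrix.one_apply] using h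

private lemma split_sum {t : ℕ} (O : Matrix (Fin t) (Fin t) (ZMod 2)) (hO : Oᵀ * O = 1)
    (S : Finset (Fin t)) (x : {i // i ∈ S} → ZMod 2) (j : Fin t) :
    ∑ k : {i // i ∈ S}, O k.1 j * ∑ i : {i // i ∈ S}, O k.1 i.1 * x i
      + ∑ k : {i // i ∈ Sᶜ}, O k.1 j * ∑ i : {i // i ∈ S}, O k.1 i.1 * x i
      = ∑ i : {i // i ∈ S}, (if j = i.1 then 1 else 0) * x i := by
  classical
  have h1 : ∑ k : {i // i ∈ S}, O k.1 j * ∑ i : {i // i ∈ S}, O k.1 i.1 * x i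
      = ∑ k ∈ S, O k j * ∑ i : {i // i ∈ S}, O k i.1 * x i :=
    Finset.sum_coe_sort S (fun k => O k j * ∑ i : {i // i ∈ S}, O k i.1 * x i)
  have h2 : ∑ k : {i // i ∈ Sᶜ}, O k.1 j * ∑ i : {i // i ∈ S}, O k.1 i.1 * x i
      = ∑ k ∈ Sᶜ, O k j * ∑ i : {i // i ∈ S}, O k i.1 * x i :=
    Finset.sum_coe_sort Sᶜ (fun k => O k j * ∑ i : {i // i ∈ S}, O k i.1 * x i)
  rw [h1, h2, Finset.sum_add_sum_compl]
  have h3 : ∀ k : Fin t, O k j * ∑ i : {i // i ∈ S}, O k i.1 * x i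
      = ∑ i : {i // i ∈ S}, O k j * (O k i.1 * x i) := fun k => Finset.mul_sum _ _ _
  simp_rw [h3]
  rw [Finset.sum_comm]
  refine Finset.sum_congr rfl (fun i _ => ?_)
  rw [← orth_entry O hO j i.1, Finset.sum_mul]
  exact Finset.sum_congr rfl (fun k _ => by ring)

private lemma key_le {t : ℕ} (O : Matrix (Fin t) (Fin t) (ZMod 2)) (hO : Oᵀ * O = 1)
    (S : Finset (Fin t)) :
    Module.finrank (ZMod 2)
        (LinearMap.ker ((O.submatrix (Subtype.val : {i // i ∈ S} → Fin t)
          (Subtype.val : {i // i ∈ S} → Fin t)).mulVecLin)) ≤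
      Module.finrank (ZMod 2)
        (LinearMap.ker (((O.submatrix (Subtype.val : {i // i ∈ Sᶜ} → Fin t)
          (Subtype.val : {i // i ∈ Sᶜ} → Fin t))ᵀ).mulVecLin)) := by
  classical
  set A := O.submatrix (Subtype.val : {i // i ∈ S} → Fin t)
    (Subtype.val : {i // i ∈ S} → Fin t) with hA
  set C := O.submatrix (Subtype.val : {i // i ∈ Sᶜ} → Fin t)
    (Subtype.val : {i // i ∈ S} → Fin t) with hC
  set Dt := (O.submatrix (Subtype.val : {i // i ∈ Sᶜ} → Fin t)
    (Subtype.val : {i // i ∈ Sᶜ} → Fin t))ᵀ with hDt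
  -- for x in ker A, each "row-S" term vanishes
  have hterm1 : ∀ x : {i // i ∈ S} → ZMod 2, A.mulVec x = 0 → ∀ j : Fin t,
      ∑ k : {i // i ∈ S}, O k.1 j * ∑ i : {i // i ∈ S}, O k.1 i.1 * x i = 0 := by
    intro x hx j
    refine Finset.sum_eq_zero (fun k _ => ?_)
    have hk : ∑ i : {i // i ∈ S}, O k.1 i.1 * x i = 0 := by
      have := congrFun hx k
      simpa [hA, Matrix.mulVec, dotProduct] using this
    rw [hk, mul_zero]
  -- membership: C x ∈ ker Dᵀ
  have hmem : ∀ x : {i // i ∈ S} → ZMod 2, A.mulVec x = 0 → Dt.mulVec (C.mulVec x) = 0 := by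
    intro x hx
    funext j
    have hsp := split_sum O hO S x j.1
    rw [hterm1 x hx j.1, zero_add] at hsp
    have hRHS : ∑ i : {i // i ∈ S}, (if (j : Fin t) = i.1 then 1 else 0) * x i = 0 := by
      refine Finset.sum_eq_zero (fun i _ => ?_)
      have hne : (j : Fin t) ≠ i.1 := by
        intro h
        have hj := j.2
        rw [h] at hj
        exact (Finset.mem_compl.mp hj) i.2
      simp [hne]
    rw [hRHS] at hsp
    have : Dt.mulVec (C.mulVec x) j
        = ∑ k : {i // i ∈ Sᶜ}, O k.1 j.1 * ∑ i : {i // i ∈ S}, O k.1 i.1 * x i := by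
      simp [hDt, hC, Matrix.mulVec, dotProduct, Finset.mul_sum]
    rw [this, hsp]
    rfl
  -- the injective linear map
  let f : LinearMap.ker A.mulVecLin →ₗ[ZMod 2] LinearMap.ker Dt.mulVecLin :=
    LinearMap.codRestrict _ (C.mulVecLin ∘ₗ (LinearMap.ker A.mulVecLin).subtype)
      (fun z => by
        have hz : A.mulVec z.1 = 0 := z.2
        simpa [Matrix.mulVecLin_apply] using hmem z.1 hz)
  have hinj : Function.Injective f := by
    rw [← LinearMap.ker_eq_bot, LinearMap.ker_eq_bot']
    intro z hz
    have hCz : C.mulVec z.1 = 0 := by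
      have := congrArg Subtype.val hz
      simpa [f, Matrix.mulVecLin_apply] using this
    have hAz : A.mulVec z.1 = 0 := z.2
    have hz0 : z.1 = 0 := by
      funext i₀
      have hsp := split_sum O hO S z.1 i₀.1
      rw [hterm1 z.1 hAz i₀.1, zero_add] at hsp
      have hterm2 : ∑ k : {i // i ∈ Sᶜ}, O k.1 i₀.1 * ∑ i : {i // i ∈ S}, O k.1 i.1 * z.1 i
          = 0 := by
        refine Finset.sum_eq_zero (fun k _ => ?_)
        have hk : ∑ i : {i // i ∈ S}, O k.1 i.1 * z.1 i = 0 := by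
          have := congrFun hCz k
          simpa [hC, Matrix.mulVec, dotProduct] using this
        rw [hk, mul_zero]
      rw [hterm2] at hsp
      have hRHS : ∑ i : {i // i ∈ S}, (if (i₀ : Fin t) = i.1 then 1 else 0) * z.1 i
          = z.1 i₀ := by
        have hval : ∀ i : {i // i ∈ S}, ((i₀ : Fin t) = i.1) = (i₀ = i) := by
          intro i; exact propext Subtype.ext_iff.symm
        simp_rw [hval]
        simp
      rw [hRHS] at hsp
      exact hsp.symm
    exact Subtype.ext hz0
  exact LinearMap.finrank_le_finrank_of_injective hinj

private lemma nullity_transpose {n : Type} [Fintype n] [DecidableEq n]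
    (M : Matrix n n (ZMod 2)) :
    Module.finrank (ZMod 2) (LinearMap.ker (Mᵀ.mulVecLin)) =
      Module.finrank (ZMod 2) (LinearMap.ker (M.mulVecLin)) := by
  have h1 := LinearMap.finrank_range_add_finrank_ker (M.mulVecLin)
  have h2 := LinearMap.finrank_range_add_finrank_ker (Mᵀ.mulVecLin)
  have h3 : Mᵀ.rank = M.rank := Matrix.rank_transpose M
  unfold Matrix.rank at h3
  omega

theorem stmt_3 (t : ℕ) (O : Matrix (Fin t) (Fin t) (ZMod 2)) (hO : Oᵀ * O = 1)
    (S : Finset (Fin t)) :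
    Module.finrank (ZMod 2)
        (LinearMap.ker ((O.submatrix (Subtype.val : {i // i ∈ S} → Fin t)
          (Subtype.val : {i // i ∈ S} → Fin t)).mulVecLin)) =
      Module.finrank (ZMod 2)
        (LinearMap.ker ((O.submatrix (Subtype.val : {i // i ∈ Sᶜ} → Fin t)
          (Subtype.val : {i // i ∈ Sᶜ} → Fin t)).mulVecLin)) := by
  have h1 := key_le O hO S
  have h2 := key_le O hO Sᶜ
  rw [compl_compl] at h2
  rw [nullity_transpose] at h1 h2
  exact le_antisymm h1 h2
end

section
/- Let A be a t×t matrix over F_2 such that every principal minor of A equals 1 (i.e., det(A_{S,S}) = 1 for every nonempty subset S of {1,...,t}). Then there exists a permutation matrix P such that P A P^{-1} is upper triangular. -/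
open scoped Classical
open Matrix

namespace Stmt4Aux

variable {t : ℕ}

def Ed (A : Matrix (Fin t) (Fin t) (ZMod 2)) (x y : Fin t) : Prop :=
  A x y = 1 ∧ x ≠ y

def PP (A : Matrix (Fin t) (Fin t) (ZMod 2)) (S : Finset (Fin t)) : Prop :=
  ∀ y ∈ S, ∃ x ∈ S, Ed A x y

lemma zmod2_cases (a : ZMod 2) : a = 0 ∨ a = 1 := by
  fin_cases a
  · exact Or.inl rfl
  · exact Or.inr rfl

lemma diag_one (A : Matrix (Fin t) (Fin t) (ZMod 2))
    (h : ∀ S : Finset (Fin t), S.Nonempty →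
      (A.submatrix (Subtype.val : {i // i ∈ S} → Fin t)
        (Subtype.val : {i // i ∈ S} → Fin t)).det = 1) (y : Fin t) : A y y = 1 := by
  have hd := h {y} ⟨y, Finset.mem_singleton_self y⟩
  haveI : Unique {i // i ∈ ({y} : Finset (Fin t))} :=
    ⟨⟨⟨y, Finset.mem_singleton_self y⟩⟩, fun a => Subtype.ext (Finset.mem_singleton.mp a.2)⟩
  have hdef : ((default : {i // i ∈ ({y} : Finset (Fin t))}) : Fin t) = y :=
    Finset.mem_singleton.mp (Subtype.prop _)
  rw [Matrix.det_unique, Matrix.submatrix_apply, hdef] at hd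
  exact hd

lemma no_P (A : Matrix (Fin t) (Fin t) (ZMod 2))
    (h : ∀ S : Finset (Fin t), S.Nonempty →
      (A.submatrix (Subtype.val : {i // i ∈ S} → Fin t)
        (Subtype.val : {i // i ∈ S} → Fin t)).det = 1) :
    ∀ S : Finset (Fin t), S.Nonempty → ¬ PP A S := by
  intro S
  induction S using Finset.strongInduction with
  | _ S ih =>
    intro hne hP
    have hgex : ∀ y : Fin t, ∃ x : Fin t, y ∈ S → x ∈ S ∧ Ed A x y := by
      intro y
      by_cases hy : y ∈ S
      · obtain ⟨x, hx, he⟩ := hP y hy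
        exact ⟨x, fun _ => ⟨hx, he⟩⟩
      · exact ⟨y, fun hy' => absurd hy' hy⟩
    choose g hg using hgex
    have hgS : ∀ z ∈ S, g z ∈ S := fun z hz => (hg z hz).1
    have hiter : ∀ (y : Fin t), y ∈ S → ∀ i, g^[i] y ∈ S := by
      intro y hy i
      induction i with
      | zero => simpa
      | succ n ihn => rw [Function.iterate_succ_apply']; exact hgS _ ihn
    -- any periodic orbit inside S must be all of S (else it is a smaller P-set)
    have horb : ∀ (y : Fin t), y ∈ S → ∀ m : ℕ, 0 < m → g^[m] y = y →
        Finset.image (fun i => g^[i] y) (Finset.range m) = S := by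
      intro y hy m hm hper
      set C := Finset.image (fun i => g^[i] y) (Finset.range m) with hC
      have hCsub : C ⊆ S := by
        intro z hz
        obtain ⟨i, _, rfl⟩ := Finset.mem_image.mp hz
        exact hiter y hy i
      have hCP : PP A C := by
        intro z hz
        obtain ⟨i, hi, rfl⟩ := Finset.mem_image.mp hz
        have hzS : g^[i] y ∈ S := hiter y hy i
        refine ⟨g (g^[i] y), ?_, (hg _ hzS).2⟩
        rw [show g (g^[i] y) = g^[i + 1] y from (Function.iterate_succ_apply' g i y).symm]
        rcases eq_or_lt_of_le (Nat.succ_le_of_lt (Finset.mem_range.mp hi)) with heq | hlt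
        · have hp : g^[i + 1] y = y := by rw [show i + 1 = m from heq]; exact hper
          rw [hp]
          exact Finset.mem_image.mpr ⟨0, Finset.mem_range.mpr hm, rfl⟩
        · exact Finset.mem_image.mpr ⟨i + 1, Finset.mem_range.mpr hlt, rfl⟩
      by_contra hCne
      exact ih C (hCsub.ssubset_of_ne hCne)
        ⟨y, Finset.mem_image.mpr ⟨0, Finset.mem_range.mpr hm, rfl⟩⟩ hCP
    -- uniqueness of in-neighbours
    have key : ∀ y0 ∈ S, ∀ x ∈ S, Ed A x y0 → x = g y0 := by
      intro y0 hy0 x hx hEd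
      have hper0 : ∃ m, 0 < m ∧ g^[m] y0 = y0 := by
        obtain ⟨i, j, hij, heq⟩ := Finite.exists_ne_map_eq_of_infinite (fun i : ℕ => g^[i] y0)
        have main : ∀ i j : ℕ, i < j → g^[i] y0 = g^[j] y0 → ∃ m, 0 < m ∧ g^[m] y0 = y0 := by
          intro i j hlt heq
          have hy' : g^[i] y0 ∈ S := hiter y0 hy0 i
          have hper' : g^[j - i] (g^[i] y0) = g^[i] y0 := by
            rw [← Function.iterate_add_apply, Nat.sub_add_cancel hlt.le, ← heq]
          have hSorb := horb _ hy' (j - i) (by omega) hper'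
          have hy0mem : y0 ∈ Finset.image (fun k => g^[k] (g^[i] y0)) (Finset.range (j - i)) := by
            rw [hSorb]; exact hy0
          obtain ⟨k, hk, hky⟩ := Finset.mem_image.mp hy0mem
          refine ⟨j - i, by omega, ?_⟩
          have hcomm : ∀ (a b : ℕ) (z : Fin t), g^[a] (g^[b] z) = g^[b] (g^[a] z) := by
            intro a b z
            rw [← Function.iterate_add_apply, ← Function.iterate_add_apply, Nat.add_comm]
          calc g^[j - i] y0 = g^[j - i] (g^[k] (g^[i] y0)) := by rw [hky]
            _ = g^[k] (g^[j - i] (g^[i] y0)) := hcomm (j - i) k (g^[i] y0)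
            _ = y0 := by rw [hper', hky]
        rcases hij.lt_or_gt with hlt | hlt
        · exact main i j hlt heq
        · exact main j i hlt heq.symm
      have hPex : ∃ k, 0 < k ∧ g^[k] y0 = y0 := hper0
      set m1 := Nat.find hPex with hm1def
      obtain ⟨hm1pos, hm1per⟩ := Nat.find_spec hPex
      have hm1min : ∀ k, 0 < k → k < m1 → g^[k] y0 ≠ y0 := fun k hk hkm hp =>
        Nat.find_min hPex hkm ⟨hk, hp⟩
      have hdist : ∀ i j, i < j → j < m1 → g^[i] y0 ≠ g^[j] y0 := by
        intro i j hij hjm heq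
        have hper'' : g^[m1 - j + i] y0 = y0 := by
          have h1 : g^[m1 - j] (g^[j] y0) = y0 := by
            rw [← Function.iterate_add_apply, Nat.sub_add_cancel hjm.le, hm1per]
          calc g^[m1 - j + i] y0 = g^[m1 - j] (g^[i] y0) := by rw [Function.iterate_add_apply]
            _ = g^[m1 - j] (g^[j] y0) := by rw [heq]
            _ = y0 := h1
        exact hm1min _ (by omega) (by omega) hper''
      have hSorb := horb y0 hy0 m1 hm1pos hm1per
      have hxC : x ∈ Finset.image (fun i => g^[i] y0) (Finset.range m1) := by
        rw [hSorb]; exact hx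
      obtain ⟨j, hj, hjx⟩ := Finset.mem_image.mp hxC
      rw [Finset.mem_range] at hj
      by_contra hxg
      have hj0 : j ≠ 0 := by
        rintro rfl
        simp only [Function.iterate_zero_apply] at hjx
        exact hEd.2 hjx.symm
      have hj1 : j ≠ 1 := by
        rintro rfl
        rw [Function.iterate_one] at hjx
        exact hxg hjx.symm
      have hj2 : 2 ≤ j := by omega
      set S' := insert y0 (Finset.image (fun i => g^[i] y0) (Finset.Ico j m1)) with hS'def
      have hS'sub : S' ⊆ S := by
        intro z hz
        rcases Finset.mem_insert.mp hz with rfl | hz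
        · exact hy0
        · obtain ⟨i, _, rfl⟩ := Finset.mem_image.mp hz
          exact hiter y0 hy0 i
      have hgy0S' : g y0 ∉ S' := by
        intro hmem
        rcases Finset.mem_insert.mp hmem with heq | hmem
        · exact (hg y0 hy0).2.2 heq
        · obtain ⟨i, hi, hieq⟩ := Finset.mem_image.mp hmem
          rw [Finset.mem_Ico] at hi
          exact hdist 1 i (by omega) hi.2 (by rw [Function.iterate_one]; exact hieq.symm)
      have hssub : S' ⊂ S :=
        (Finset.ssubset_iff_of_subset hS'sub).mpr ⟨g y0, hgS y0 hy0, hgy0S'⟩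
      have hS'P : PP A S' := by
        intro z hz
        rcases Finset.mem_insert.mp hz with rfl | hzi
        · refine ⟨x, ?_, hEd⟩
          exact Finset.mem_insert_of_mem
            (Finset.mem_image.mpr ⟨j, Finset.mem_Ico.mpr ⟨le_refl j, hj⟩, hjx⟩)
        · obtain ⟨i, hi, rfl⟩ := Finset.mem_image.mp hzi
          rw [Finset.mem_Ico] at hi
          have hzS : g^[i] y0 ∈ S := hiter y0 hy0 i
          refine ⟨g (g^[i] y0), ?_, (hg _ hzS).2⟩
          rw [show g (g^[i] y0) = g^[i + 1] y0 from (Function.iterate_succ_apply' g i y0).symm]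
          rcases eq_or_lt_of_le (Nat.succ_le_of_lt hi.2) with heq | hlt
          · have hp : g^[i + 1] y0 = y0 := by rw [show i + 1 = m1 from heq]; exact hm1per
            rw [hp]; exact Finset.mem_insert_self _ _
          · exact Finset.mem_insert_of_mem
              (Finset.mem_image.mpr ⟨i + 1, Finset.mem_Ico.mpr ⟨by omega, hlt⟩, rfl⟩)
      exact ih S' hssub ⟨y0, Finset.mem_insert_self _ _⟩ hS'P
    -- now every column of the principal submatrix on S sums to zero
    obtain ⟨y, hy⟩ := hne
    have hdet := h S ⟨y, hy⟩
    have hsum : ∀ w ∈ S, ∑ x ∈ S, A x w = 0 := by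
      intro w hw
      have h1 : ∑ x ∈ S.erase w, A x w = A (g w) w := by
        apply Finset.sum_eq_single_of_mem
        · exact Finset.mem_erase.mpr ⟨(hg w hw).2.2, (hg w hw).1⟩
        · intro b hb hbne
          rcases Finset.mem_erase.mp hb with ⟨hbw, hbS⟩
          rcases zmod2_cases (A b w) with h0 | h1
          · exact h0
          · exact absurd (key w hw b hbS ⟨h1, hbw⟩) hbne
      rw [← Finset.add_sum_erase S _ hw, h1, diag_one A h, (hg w hw).2.1]
      decide
    have hv : (fun _ : {i // i ∈ S} => (1 : ZMod 2)) ᵥ*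
        (A.submatrix (Subtype.val : {i // i ∈ S} → Fin t)
          (Subtype.val : {i // i ∈ S} → Fin t)) = 0 := by
      funext w
      have hcoe : ∑ x : {i // i ∈ S}, A x.val w.val = 0 := by
        rw [Finset.sum_coe_sort S (fun x => A x w.val)]
        exact hsum w.val w.2
      simpa [Matrix.vecMul, dotProduct] using hcoe
    have hz := Matrix.eq_zero_of_vecMul_eq_zero (by rw [hdet]; exact one_ne_zero) hv
    have h10 : (1 : ZMod 2) = 0 := congrFun hz ⟨y, hy⟩
    exact one_ne_zero h10

lemma chain_set (A : Matrix (Fin t) (Fin t) (ZMod 2)) {a b : Fin t}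
    (hab : Relation.ReflTransGen (Ed A) a b) :
    ∃ S : Finset (Fin t), a ∈ S ∧ b ∈ S ∧ ∀ y ∈ S, y ≠ a → ∃ x ∈ S, Ed A x y := by
  induction hab with
  | refl =>
      exact ⟨{a}, Finset.mem_singleton_self a, Finset.mem_singleton_self a,
        fun y hy hne => absurd (Finset.mem_singleton.mp hy) hne⟩
  | @tail c d hac hcd ih =>
      obtain ⟨S, haS, hcS, hS⟩ := ih
      refine ⟨insert d S, Finset.mem_insert_of_mem haS, Finset.mem_insert_self _ _, ?_⟩
      intro y hy hya
      rcases Finset.mem_insert.mp hy with rfl | hyS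
      · exact ⟨c, Finset.mem_insert_of_mem hcS, hcd⟩
      · obtain ⟨x, hx, he⟩ := hS y hyS hya
        exact ⟨x, Finset.mem_insert_of_mem hx, he⟩

lemma no_cycle (A : Matrix (Fin t) (Fin t) (ZMod 2))
    (h : ∀ S : Finset (Fin t), S.Nonempty →
      (A.submatrix (Subtype.val : {i // i ∈ S} → Fin t)
        (Subtype.val : {i // i ∈ S} → Fin t)).det = 1) :
    ∀ a : Fin t, ¬ Relation.TransGen (Ed A) a a := by
  intro a hcyc
  rw [Relation.TransGen.tail'_iff] at hcyc
  obtain ⟨b, hab, hba⟩ := hcyc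
  obtain ⟨S, haS, hbS, hS⟩ := chain_set A hab
  have hP : PP A S := by
    intro y hy
    by_cases hya : y = a
    · exact ⟨b, hbS, hya ▸ hba⟩
    · exact hS y hy hya
  exact no_P A h S ⟨a, haS⟩ hP

end Stmt4Aux

theorem stmt_4 (t : ℕ) (A : Matrix (Fin t) (Fin t) (ZMod 2))
    (h : ∀ S : Finset (Fin t), S.Nonempty →
      (A.submatrix (Subtype.val : {i // i ∈ S} → Fin t)
        (Subtype.val : {i // i ∈ S} → Fin t)).det = 1) :
    ∃ σ : Equiv.Perm (Fin t), ∀ i j : Fin t, j < i → A (σ i) (σ j) = 0 := by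
  classical
  have hacyc : ∀ a : Fin t, ¬ Relation.TransGen (Stmt4Aux.Ed A) a a := Stmt4Aux.no_cycle A h
  let le' : Fin t → Fin t → Prop := fun a b => a = b ∨ Relation.TransGen (Stmt4Aux.Ed A) a b
  haveI hpo : IsPartialOrder (Fin t) le' := by
    refine { refl := fun a => Or.inl rfl, trans := ?_, antisymm := ?_ }
    · rintro a b c (rfl | hab) (rfl | hbc)
      · exact Or.inl rfl
      · exact Or.inr hbc
      · exact Or.inr hab
      · exact Or.inr (hab.trans hbc)
    · rintro a b (rfl | hab) hba
      · rfl
      · rcases hba with rfl | hba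
        · rfl
        · exact absurd (hab.trans hba) (hacyc a)
  obtain ⟨s, hlin, hrs⟩ := extend_partialOrder le'
  haveI := hlin
  let f : Fin t → ℕ := fun x => (Finset.univ.filter (fun z => s z x ∧ z ≠ x)).card
  have hmono : ∀ x y : Fin t, s x y → x ≠ y → f x < f y := by
    intro x y hxy hne
    apply Finset.card_lt_card
    have hsub : Finset.univ.filter (fun z => s z x ∧ z ≠ x) ⊆
        Finset.univ.filter (fun z => s z y ∧ z ≠ y) := by
      intro z hz
      simp only [Finset.mem_filter, Finset.mem_univ, true_and] at hz ⊢
      refine ⟨trans_of s hz.1 hxy, ?_⟩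
      rintro rfl
      exact hne (antisymm_of s hxy hz.1)
    refine (Finset.ssubset_iff_of_subset hsub).mpr ⟨x, ?_, ?_⟩
    · simp only [Finset.mem_filter, Finset.mem_univ, true_and]
      exact ⟨hxy, hne⟩
    · simp
  have hbound : ∀ x : Fin t, f x < t := by
    intro x
    have hsub : Finset.univ.filter (fun z => s z x ∧ z ≠ x) ⊆ Finset.univ.erase x := by
      intro z hz
      simp only [Finset.mem_filter, Finset.mem_univ, true_and] at hz
      exact Finset.mem_erase.mpr ⟨hz.2, Finset.mem_univ z⟩
    calc f x ≤ (Finset.univ.erase x).card := Finset.card_le_card hsub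
      _ < Finset.univ.card := Finset.card_erase_lt_of_mem (Finset.mem_univ x)
      _ = t := by simp
  let F : Fin t → Fin t := fun x => ⟨f x, hbound x⟩
  have hinj : Function.Injective F := by
    intro x y hxy
    by_contra hne
    have hf : f x = f y := congrArg Fin.val hxy
    rcases total_of s x y with hxy' | hyx'
    · exact absurd hf (Nat.ne_of_lt (hmono x y hxy' hne))
    · exact absurd hf.symm (Nat.ne_of_lt (hmono y x hyx' (Ne.symm hne)))
  have hbij := Finite.injective_iff_bijective.mp hinj
  refine ⟨(Equiv.ofBijective F hbij).symm, ?_⟩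
  intro i j hij
  by_contra hA
  set x := (Equiv.ofBijective F hbij).symm i with hxdef
  set y := (Equiv.ofBijective F hbij).symm j with hydef
  have hxy : x ≠ y := by
    intro he
    have : i = j := by
      rw [hxdef, hydef] at he
      exact (Equiv.ofBijective F hbij).symm.injective he
    omega
  have hA1 : A x y = 1 := by
    rcases Stmt4Aux.zmod2_cases (A x y) with h0 | h1
    · exact absurd h0 hA
    · exact h1
  have hs : s x y := hrs x y (Or.inr (Relation.TransGen.single ⟨hA1, hxy⟩))
  have hlt : f x < f y := hmono x y hs hxy
  have hFx : F x = i := (Equiv.ofBijective F hbij).apply_symm_apply i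
  have hFy : F y = j := (Equiv.ofBijective F hbij).apply_symm_apply j
  have h1 : f x = (i : ℕ) := congrArg Fin.val hFx
  have h2 : f y = (j : ℕ) := congrArg Fin.val hFy
  have : (j : ℕ) < (i : ℕ) := hij
  omega
end

section
/- Let O be a t×t binary orthogonal matrix over F_2 (O^T O = I) that is not the identity. Then there exists a nonempty proper subset S of {1,...,t} such that the principal submatrix O_{S,S} is singular, i.e., det(O_{S,S}) = 0 over F_2. -/
open scoped Classical
open Matrix

lemma zmod2_mul_self (x : ZMod 2) : x * x = x := by revert x; decide

lemma zmod2_ne_one {x : ZMod 2} (h : x ≠ 1) : x = 0 := by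
  revert x; decide

lemma zmod2_ne_zero {x : ZMod 2} (h : x ≠ 0) : x = 1 := by
  revert x; decide

section main
variable {t : ℕ} (O : Matrix (Fin t) (Fin t) (ZMod 2))

lemma colsum (hO : Oᵀ * O = 1) (j : Fin t) : ∑ k, O k j = 1 := by
  have h := congrFun (congrFun hO j) j
  rw [Matrix.mul_apply, Matrix.one_apply_eq] at h
  calc ∑ k, O k j = ∑ k, Oᵀ j k * O k j := by
        refine Finset.sum_congr rfl fun k _ => ?_
        rw [Matrix.transpose_apply, zmod2_mul_self]
    _ = 1 := h

lemma finish (hO : Oᵀ * O = 1) (S : Finset (Fin t)) (hne : S.Nonempty)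
    (hcol : ∀ j ∈ S, ∑ i ∈ S, O i j = 0) :
    S ≠ Finset.univ ∧
      (O.submatrix (Subtype.val : {i // i ∈ S} → Fin t)
        (Subtype.val : {i // i ∈ S} → Fin t)).det = 0 := by
  obtain ⟨j₀, hj₀⟩ := hne
  constructor
  · intro h
    have h1 := colsum O hO j₀
    have h0 := hcol j₀ hj₀
    rw [h] at h0
    rw [h0] at h1
    exact one_ne_zero h1.symm
  · rw [← Matrix.exists_vecMul_eq_zero_iff]
    refine ⟨fun _ => 1, ?_, ?_⟩
    · intro h
      have := congrFun h ⟨j₀, hj₀⟩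
      simp at this
    · funext j
      simp only [Matrix.vecMul, dotProduct, Matrix.submatrix_apply, one_mul]
      calc ∑ i : {i // i ∈ S}, O i.val j.val = ∑ i ∈ S, O i j.val :=
            Finset.sum_attach S fun i => O i j.val
        _ = 0 := hcol j.val j.property

lemma eq_one_of_wf (hO : Oᵀ * O = 1) (hdiag : ∀ i, O i i = 1)
    (hwf : WellFounded (fun i j : Fin t => i ≠ j ∧ O i j = 1)) : O = 1 := by
  have key : ∀ j i, O i j = (1 : Matrix (Fin t) (Fin t) (ZMod 2)) i j := by
    intro j
    induction j using hwf.induction with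
    | _ j IH =>
      intro i
      by_cases hij : i = j
      · subst hij; rw [Matrix.one_apply_eq]; exact hdiag i
      · rw [Matrix.one_apply_ne hij]
        by_contra hne0
        have hOij : O i j = 1 := zmod2_ne_zero hne0
        have hcoli : ∀ k, O k i = if k = i then 1 else 0 := by
          intro k
          rw [IH i ⟨hij, hOij⟩ k]
          by_cases h : k = i
          · subst h; rw [Matrix.one_apply_eq, if_pos rfl]
          · rw [Matrix.one_apply_ne h, if_neg h]
        have horth := congrFun (congrFun hO i) j
        rw [Matrix.mul_apply, Matrix.one_apply_ne hij] at horth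
        have hsum : (∑ k, Oᵀ i k * O k j) = O i j := by
          rw [Finset.sum_eq_single i]
          · rw [Matrix.transpose_apply, hcoli i, if_pos rfl, one_mul]
          · intro k _ hk; rw [Matrix.transpose_apply, hcoli k, if_neg hk, zero_mul]
          · intro h; exact absurd (Finset.mem_univ i) h
        rw [hsum, hOij] at horth
        exact one_ne_zero horth
  ext i j
  exact key j i

lemma exists_good (hdiag : ∀ i, O i i = 1)
    (hSex : ∃ S : Finset (Fin t), S.Nonempty ∧ ∀ j ∈ S, ∃ i ∈ S, i ≠ j ∧ O i j = 1) :
    ∃ S : Finset (Fin t), S.Nonempty ∧ ∀ j ∈ S, ∑ i ∈ S, O i j = 0 := by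
  classical
  set P : Finset (Fin t) → Prop :=
    fun S => S.Nonempty ∧ ∀ j ∈ S, ∃ i ∈ S, i ≠ j ∧ O i j = 1 with hP
  obtain ⟨S₀, hS₀⟩ := hSex
  have hF : (Finset.univ.filter P).Nonempty :=
    ⟨S₀, Finset.mem_filter.2 ⟨Finset.mem_univ _, hS₀⟩⟩
  obtain ⟨S, hSF, hmin⟩ := Finset.exists_min_image (Finset.univ.filter P) Finset.card hF
  rw [Finset.mem_filter] at hSF
  obtain ⟨-, hSne, hS⟩ := hSF
  have hmin' : ∀ T : Finset (Fin t), P T → S.card ≤ T.card := by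
    intro T hT
    exact hmin T (Finset.mem_filter.2 ⟨Finset.mem_univ _, hT⟩)
  -- choose in-neighbor function
  have hS' : ∀ j : Fin t, ∃ i : Fin t, j ∈ S → (i ∈ S ∧ i ≠ j ∧ O i j = 1) := by
    intro j
    by_cases h : j ∈ S
    · obtain ⟨i, hi1, hi2, hi3⟩ := hS j h
      exact ⟨i, fun _ => ⟨hi1, hi2, hi3⟩⟩
    · exact ⟨j, fun h' => absurd h' h⟩
  choose f hf using hS'
  -- iterates stay in S
  obtain ⟨a₀, ha₀⟩ := hSne
  have hiter : ∀ (v : Fin t), v ∈ S → ∀ k, f^[k] v ∈ S := by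
    intro v hv k
    induction k with
    | zero => simpa using hv
    | succ k ih =>
      rw [Function.iterate_succ_apply']
      exact (hf _ ih).1
  -- find a periodic point
  obtain ⟨m, n, hmn, heq⟩ :=
    Finite.exists_ne_map_eq_of_infinite (fun k : ℕ => f^[k] a₀)
  -- wlog m < n
  have hper : ∃ a ∈ S, ∃ q, 0 < q ∧ f^[q] a = a := by
    rcases lt_or_gt_of_ne hmn with h | h
    · refine ⟨f^[m] a₀, hiter a₀ ha₀ m, n - m, by omega, ?_⟩
      rw [← Function.iterate_add_apply, Nat.sub_add_cancel h.le]
      exact heq.symm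
    · refine ⟨f^[n] a₀, hiter a₀ ha₀ n, m - n, by omega, ?_⟩
      rw [← Function.iterate_add_apply, Nat.sub_add_cancel h.le]
      exact heq
  obtain ⟨a, ha, hq⟩ := hper
  -- minimal period
  set p := Nat.find hq with hpdef
  obtain ⟨hppos, hpa⟩ : 0 < p ∧ f^[p] a = a := Nat.find_spec hq
  have hpmin : ∀ k, 0 < k → k < p → f^[k] a ≠ a := by
    intro k h1 h2 h3
    exact Nat.find_min hq h2 ⟨h1, h3⟩
  -- the orbit
  set S' : Finset (Fin t) := (Finset.range p).image (fun k => f^[k] a) with hS'def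
  have hS'sub : S' ⊆ S := by
    intro x hx
    rw [hS'def, Finset.mem_image] at hx
    obtain ⟨k, -, rfl⟩ := hx
    exact hiter a ha k
  have haS' : a ∈ S' := by
    rw [hS'def, Finset.mem_image]
    exact ⟨0, Finset.mem_range.2 hppos, rfl⟩
  have hS'P : P S' := by
    refine ⟨⟨a, haS'⟩, ?_⟩
    intro j hj
    rw [hS'def, Finset.mem_image] at hj
    obtain ⟨k, hk, rfl⟩ := hj
    rw [Finset.mem_range] at hk
    have hjS : f^[k] a ∈ S := hiter a ha k
    refine ⟨f (f^[k] a), ?_, (hf _ hjS).2.1, (hf _ hjS).2.2⟩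
    rw [hS'def, Finset.mem_image]
    by_cases hkp : k + 1 < p
    · exact ⟨k + 1, Finset.mem_range.2 hkp, Function.iterate_succ_apply' f k a⟩
    · have hk1 : k + 1 = p := by omega
      refine ⟨0, Finset.mem_range.2 hppos, ?_⟩
      rw [Function.iterate_zero_apply]
      rw [← hk1] at hpa
      rw [← Function.iterate_succ_apply' f k a]
      exact hpa.symm
  have hSeq : S' = S := Finset.eq_of_subset_of_card_le hS'sub (hmin' S' hS'P)
  -- injectivity on range p, card S = p
  have hinj : ∀ i < p, ∀ j < p, f^[i] a = f^[j] a → i = j := by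
    have key : ∀ i j, i < j → j < p → f^[i] a ≠ f^[j] a := by
      intro i j hij hjp hne
      have : f^[p - j + i] a = a := by
        have h1 : f^[p - j] (f^[j] a) = a := by
          rw [← Function.iterate_add_apply, Nat.sub_add_cancel hjp.le]
          exact hpa
        rw [← hne, ← Function.iterate_add_apply] at h1
        exact h1
      exact hpmin (p - j + i) (by omega) (by omega) this
    intro i hi j hj hne
    rcases lt_trichotomy i j with h | h | h
    · exact absurd hne (key i j h hj)
    · exact h
    · exact absurd hne.symm (key j i h hi)
  have hcardS : S.card = p := by
    rw [← hSeq, hS'def]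
    rw [Finset.card_image_of_injOn, Finset.card_range]
    intro i hi j hj hne
    exact hinj i (Finset.mem_range.1 hi) j (Finset.mem_range.1 hj) hne
  -- periodicity for all points of S
  have hperiod : ∀ v ∈ S, f^[p] v = v := by
    intro v hv
    rw [← hSeq, hS'def, Finset.mem_image] at hv
    obtain ⟨k, -, rfl⟩ := hv
    rw [← Function.iterate_add_apply, Nat.add_comm, Function.iterate_add_apply, hpa]
  have hmod : ∀ v ∈ S, ∀ nn, f^[nn] v = f^[nn % p] v := by
    intro v hv nn
    have hq : ∀ q r, f^[p * q + r] v = f^[r] v := by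
      intro q
      induction q with
      | zero => intro r; simp
      | succ q ih =>
        intro r
        have : p * (q + 1) + r = (p * q + r) + p := by ring
        rw [this, Function.iterate_add_apply, hperiod v hv, ih]
    conv_lhs => rw [← Nat.div_add_mod nn p]
    exact hq (nn / p) (nn % p)
  -- orbit reaches everything
  have horbit : ∀ v ∈ S, ∀ u ∈ S, ∃ d < p, f^[d] v = u := by
    intro v hv u hu
    rw [← hSeq, hS'def, Finset.mem_image] at hv hu
    obtain ⟨kv, hkv, rfl⟩ := hv
    obtain ⟨ku, -, rfl⟩ := hu
    rw [Finset.mem_range] at hkv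
    have hva : f^[p - kv] (f^[kv] a) = a := by
      rw [← Function.iterate_add_apply, Nat.sub_add_cancel hkv.le]
      exact hpa
    have hvS : f^[kv] a ∈ S := hiter a ha kv
    refine ⟨(ku + (p - kv)) % p, Nat.mod_lt _ hppos, ?_⟩
    rw [← hmod _ hvS, Function.iterate_add_apply, hva]
  -- key: unique in-neighbor
  have hkey : ∀ v ∈ S, ∀ u ∈ S, u ≠ v → O u v = 1 → u = f v := by
    intro v hv u hu huv hOuv
    obtain ⟨d, hdp, hdu⟩ := horbit v hv u hu
    have hd0 : d ≠ 0 := by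
      intro h
      rw [h, Function.iterate_zero_apply] at hdu
      exact huv hdu.symm
    by_cases hd1 : d = 1
    · rw [hd1, Function.iterate_one] at hdu
      exact hdu.symm
    · exfalso
      have hd2 : 2 ≤ d := by omega
      -- shortcut cycle
      set T : Finset (Fin t) := (Finset.range (p - d + 1)).image (fun k => f^[k] u)
        with hTdef
      have huS : ∀ k, f^[k] u ∈ S := hiter u hu
      have hvT : f^[p - d] u = v := by
        rw [← hdu, ← Function.iterate_add_apply, Nat.sub_add_cancel hdp.le]
        exact hperiod v hv
      have huT : u ∈ T := by
        rw [hTdef, Finset.mem_image]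
        exact ⟨0, Finset.mem_range.2 (by omega), rfl⟩
      have hTP : P T := by
        refine ⟨⟨u, huT⟩, ?_⟩
        intro j hj
        rw [hTdef, Finset.mem_image] at hj
        obtain ⟨k, hk, rfl⟩ := hj
        rw [Finset.mem_range] at hk
        by_cases hkd : k < p - d
        · refine ⟨f (f^[k] u), ?_, (hf _ (huS k)).2.1, (hf _ (huS k)).2.2⟩
          rw [hTdef, Finset.mem_image]
          exact ⟨k + 1, Finset.mem_range.2 (by omega), Function.iterate_succ_apply' f k u⟩
        · have hkeq : k = p - d := by omega
          rw [hkeq, hvT]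
          exact ⟨u, huT, huv, hOuv⟩
      have hcardT : T.card ≤ p - d + 1 := by
        rw [hTdef]
        exact (Finset.card_image_le).trans (by rw [Finset.card_range])
      have := hmin' T hTP
      rw [hcardS] at this
      omega
  -- column sums vanish
  refine ⟨S, ⟨a₀, ha₀⟩, ?_⟩
  intro j hj
  have hfj : f j ∈ S := (hf j hj).1
  have hfjne : f j ≠ j := (hf j hj).2.1
  have hrw : ∀ i ∈ S, O i j = (if i = j then 1 else 0) + (if i = f j then 1 else 0) := by
    intro i hi
    by_cases h1 : i = j
    · subst h1
      rw [if_pos rfl, if_neg (fun h => hfjne h.symm), hdiag i, add_zero]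
    · rw [if_neg h1]
      by_cases h2 : i = f j
      · subst h2
        rw [if_pos rfl, (hf j hj).2.2, zero_add]
      · rw [if_neg h2, add_zero]
        by_contra hne0
        exact h2 (hkey j hj i hi h1 (zmod2_ne_zero hne0))
  calc ∑ i ∈ S, O i j
      = ∑ i ∈ S, ((if i = j then 1 else 0) + (if i = f j then (1 : ZMod 2) else 0)) :=
        Finset.sum_congr rfl hrw
    _ = (∑ i ∈ S, if i = j then 1 else 0) + ∑ i ∈ S, (if i = f j then (1 : ZMod 2) else 0) :=
        Finset.sum_add_distrib
    _ = 0 := by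
        rw [Finset.sum_ite_eq' S j (fun _ => (1 : ZMod 2)),
          Finset.sum_ite_eq' S (f j) (fun _ => (1 : ZMod 2)), if_pos hj, if_pos hfj]
        decide

end main

theorem stmt_5 (t : ℕ) (O : Matrix (Fin t) (Fin t) (ZMod 2)) (hO : Oᵀ * O = 1)
    (hne : O ≠ 1) :
    ∃ S : Finset (Fin t), S.Nonempty ∧ S ≠ Finset.univ ∧
      (O.submatrix (Subtype.val : {i // i ∈ S} → Fin t)
        (Subtype.val : {i // i ∈ S} → Fin t)).det = 0 := by
  by_cases hdiag : ∀ i, O i i = 1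
  · by_cases hSex : ∃ S : Finset (Fin t), S.Nonempty ∧ ∀ j ∈ S, ∃ i ∈ S, i ≠ j ∧ O i j = 1
    · obtain ⟨S, hne', hcol⟩ := exists_good O hdiag hSex
      obtain ⟨h1, h2⟩ := finish O hO S hne' hcol
      exact ⟨S, hne', h1, h2⟩
    · exfalso
      apply hne
      apply eq_one_of_wf O hO hdiag
      set r : Fin t → Fin t → Prop := fun i j => i ≠ j ∧ O i j = 1 with hr
      constructor
      intro j
      by_contra hj
      apply hSex
      refine ⟨Finset.univ.filter (fun v => ¬ Acc r v), ⟨j, ?_⟩, ?_⟩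
      · exact Finset.mem_filter.2 ⟨Finset.mem_univ _, hj⟩
      · intro v hv
        have hv' : ¬ Acc r v := (Finset.mem_filter.1 hv).2
        have : ∃ i, r i v ∧ ¬ Acc r i := by
          by_contra hno
          push_neg at hno
          exact hv' (Acc.intro v fun i hi => hno i hi)
        obtain ⟨i, hri, hacc⟩ := this
        exact ⟨i, Finset.mem_filter.2 ⟨Finset.mem_univ _, hacc⟩, hri⟩
  · push_neg at hdiag
    obtain ⟨i, hi⟩ := hdiag
    have hi0 : O i i = 0 := zmod2_ne_one hi
    have hcol : ∀ j ∈ ({i} : Finset (Fin t)), ∑ k ∈ ({i} : Finset (Fin t)), O k j = 0 := by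
      intro j hj
      rw [Finset.mem_singleton] at hj
      subst hj
      rw [Finset.sum_singleton, hi0]
    obtain ⟨h1, h2⟩ := finish O hO {i} ⟨i, Finset.mem_singleton_self i⟩ hcol
    exact ⟨{i}, ⟨i, Finset.mem_singleton_self i⟩, h1, h2⟩
end

section
/- Let ψ be a pure n-qubit state and define M_ψ := {y in F_2^{2n} : tr(|ψ⟩⟨ψ| P_y)^2 > 1/2}. Then M_ψ is isotropic with respect to the symplectic form: for all x, y in M_ψ, [x,y] = 0, where [x,y] is the symplectic inner product. Consequently |M_ψ| ≤ 2^n. -/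
open scoped Classical

/-- The phaseless Pauli operator `P_(a,b) = i^(a·b) X^a Z^b` on `n` qubits. -/
noncomputable def pauliOp (n : ℕ) (a b : Fin n → ZMod 2) :
    Matrix (Fin n → ZMod 2) (Fin n → ZMod 2) ℂ :=
  fun u v =>
    Complex.I ^ (∑ i, (a i).val * (b i).val) *
      (if u = a + v then 1 else 0) *
      (-1 : ℂ) ^ (∑ i, (b i).val * (v i).val)

/-- The expectation value `⟨ψ| P_(a,b) |ψ⟩ = tr(|ψ⟩⟨ψ| P_(a,b))`. -/
noncomputable def pauliExp (n : ℕ) (ψ : (Fin n → ZMod 2) → ℂ)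
    (a b : Fin n → ZMod 2) : ℂ :=
  ∑ u, ∑ v, (starRingEnd ℂ) (ψ u) * pauliOp n a b u v * ψ v

/-- The set `M_ψ = {y ∈ F_2^{2n} : tr(|ψ⟩⟨ψ| P_y)² > 1/2}`. -/
noncomputable def Mpsi (n : ℕ) (ψ : (Fin n → ZMod 2) → ℂ) :
    Set ((Fin n → ZMod 2) × (Fin n → ZMod 2)) :=
  {x | 1 / 2 < ‖pauliExp n ψ x.1 x.2‖ ^ 2}

/-! If `[x, y] = 1` then `P_x` and `P_y` anticommute. For anticommuting Hermitian involutions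
`P`, `Q` and a unit vector `ψ`, the vectors `Pψ`, `Qψ` are orthonormal for the real inner
product `re ⟪·, ·⟫` and `⟪ψ, Pψ⟫`, `⟪ψ, Qψ⟫` are real, so Bessel's inequality gives
`⟪ψ, Pψ⟫² + ⟪ψ, Qψ⟫² ≤ 1`: two points of `M_ψ` cannot anticommute. An isotropic set spans a
subspace `W ≤ W^⊥`, and as `[·, ·]` is nondegenerate on `𝔽₂^{2n}` this forces `dim W ≤ n`,
whence `|M_ψ| ≤ |W| ≤ 2^n`. -/

section InnerProduct

open RCLike

variable {𝕜 E : Type*} [RCLike 𝕜] [NormedAddCommGroup E] [InnerProductSpace 𝕜 E]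

theorem re_inner_sq_add_re_inner_sq_le (x : E) {u v : E} (hu : ‖u‖ = 1) (hv : ‖v‖ = 1)
    (huv : re (inner 𝕜 u v) = 0) :
    re (inner 𝕜 x u) ^ 2 + re (inner 𝕜 x v) ^ 2 ≤ ‖x‖ ^ 2 := by
  set p := re (inner 𝕜 x u)
  set q := re (inner 𝕜 x v)
  set w : E := (p : 𝕜) • u + (q : 𝕜) • v
  have hw : ‖w‖ ^ 2 = p ^ 2 + q ^ 2 := by
    rw [@norm_add_sq 𝕜, norm_smul, norm_smul, inner_smul_left, inner_smul_right, conj_ofReal,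
      ← mul_assoc, ← ofReal_mul, re_ofReal_mul, huv, hu, hv]
    simp only [norm_ofReal, mul_one, mul_zero, add_zero, sq_abs]
  have hxw : re (inner 𝕜 x w) = p ^ 2 + q ^ 2 := by
    rw [inner_add_right, inner_smul_right, inner_smul_right, map_add, re_ofReal_mul,
      re_ofReal_mul]
    ring
  have hcs : p ^ 2 + q ^ 2 ≤ ‖x‖ * ‖w‖ := hxw ▸ re_inner_le_norm x w
  nlinarith [norm_nonneg x, norm_nonneg w, sq_nonneg (‖x‖ - ‖w‖)]

theorem LinearMap.IsSymmetric.norm_inner_apply_self {T : E →ₗ[𝕜] E} (hT : T.IsSymmetric)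
    (x : E) : ‖inner 𝕜 x (T x)‖ = |re (inner 𝕜 x (T x))| := by
  rw [← hT x x, ← hT.coe_re_inner_apply_self, norm_ofReal, ofReal_re]

theorem LinearMap.IsSymmetric.re_inner_eq_zero_of_anticomm {P Q : E →ₗ[𝕜] E}
    (hP : P.IsSymmetric) (hQ : Q.IsSymmetric) (hPQ : P * Q = -(Q * P)) (x : E) :
    re (inner 𝕜 (P x) (Q x)) = 0 := by
  have h : inner 𝕜 (P x) (Q x) = -inner 𝕜 (Q x) (P x) := by
    rw [hP, ← Module.End.mul_apply, hPQ, LinearMap.neg_apply, Module.End.mul_apply,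
      inner_neg_right, ← hQ]
  have := congrArg re h
  rw [map_neg, inner_re_symm] at this
  rw [inner_re_symm]
  linarith

theorem LinearMap.IsSymmetric.norm_apply_of_mul_self_eq_one {P : E →ₗ[𝕜] E}
    (hP : P.IsSymmetric) (hP2 : P * P = 1) (x : E) : ‖P x‖ = ‖x‖ := by
  have h : inner 𝕜 (P x) (P x) = inner 𝕜 x x := by
    rw [hP, ← Module.End.mul_apply, hP2, Module.End.one_apply]
  rw [← pow_left_inj₀ (norm_nonneg _) (norm_nonneg _) two_ne_zero, @norm_sq_eq_re_inner 𝕜,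
    @norm_sq_eq_re_inner 𝕜, h]

theorem LinearMap.IsSymmetric.norm_inner_sq_add_norm_inner_sq_le_of_anticomm
    {P Q : E →ₗ[𝕜] E} (hP : P.IsSymmetric) (hQ : Q.IsSymmetric)
    (hP2 : P * P = 1) (hQ2 : Q * Q = 1) (hPQ : P * Q = -(Q * P)) {x : E} (hx : ‖x‖ = 1) :
    ‖inner 𝕜 x (P x)‖ ^ 2 + ‖inner 𝕜 x (Q x)‖ ^ 2 ≤ 1 := by
  rw [hP.norm_inner_apply_self, hQ.norm_inner_apply_self, sq_abs, sq_abs, ← one_pow 2, ← hx]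
  exact re_inner_sq_add_re_inner_sq_le x
    ((hP.norm_apply_of_mul_self_eq_one hP2 x).trans hx)
    ((hQ.norm_apply_of_mul_self_eq_one hQ2 x).trans hx)
    (hP.re_inner_eq_zero_of_anticomm hQ hPQ x)

end InnerProduct

namespace LinearMap.BilinForm

open Module Submodule

variable {K V : Type*} [Field K] [AddCommGroup V] [Module K V] {B : LinearMap.BilinForm K V}
  {S : Set V}

lemma span_le_orthogonal_span (hS : ∀ x ∈ S, ∀ y ∈ S, B x y = 0) :
    span K S ≤ B.orthogonal (span K S) := by
  refine span_le.mpr fun y hy => (mem_orthogonal_iff).mpr fun x hx => ?_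
  have hker : span K S ≤ LinearMap.ker (B.flip y) :=
    span_le.mpr fun x' hx' => hS x' hx' y hy
  exact hker hx

lemma two_mul_finrank_span_le [FiniteDimensional K V] (hB : B.Nondegenerate)
    (hS : ∀ x ∈ S, ∀ y ∈ S, B x y = 0) : 2 * finrank K (span K S) ≤ finrank K V := by
  have hle := finrank_mono (span_le_orthogonal_span hS)
  rw [finrank_orthogonal hB] at hle
  have := (span K S).finrank_le
  omega

lemma natCard_le_of_isotropic [Fintype K] [FiniteDimensional K V] (hB : B.Nondegenerate)
    (hS : ∀ x ∈ S, ∀ y ∈ S, B x y = 0) :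
    Nat.card S ≤ Fintype.card K ^ (finrank K V / 2) := by
  have : Finite V := Module.finite_of_finite K
  calc Nat.card S ≤ Nat.card (span K S) := Nat.card_mono (Set.toFinite _) subset_span
    _ = Fintype.card K ^ finrank K (span K S) := by
      rw [← Nat.card_eq_fintype_card, ← Module.natCard_eq_pow_finrank]
    _ ≤ Fintype.card K ^ (finrank K V / 2) :=
      Nat.pow_le_pow_right Fintype.card_pos (by have := two_mul_finrank_span_le hB hS; omega)

end LinearMap.BilinForm

open Matrix

namespace Pauli

variable {n : ℕ}

noncomputable def sign (t : ZMod 2) : ℂ := (-1) ^ t.val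

@[simp] lemma sign_zero : sign 0 = 1 := rfl

@[simp] lemma sign_one : sign 1 = -1 := by simp [sign, ZMod.val_one]

lemma sign_add (s t : ZMod 2) : sign (s + t) = sign s * sign t := by
  rw [sign, sign, sign, ZMod.val_add, ← pow_add, neg_one_pow_eq_pow_mod_two (n := _ + _)]

lemma sign_mul_self (t : ZMod 2) : sign t * sign t = 1 := by
  rw [← sign_add, CharTwo.add_self_eq_zero, sign_zero]

@[simp] lemma star_sign (t : ZMod 2) : star (sign t) = sign t := by simp [sign]

lemma neg_one_pow_sum_val (a b : Fin n → ZMod 2) :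
    (-1 : ℂ) ^ (∑ i, (a i).val * (b i).val) = sign (a ⬝ᵥ b) := by
  rw [sign, neg_one_pow_eq_pow_mod_two, ← ZMod.val_natCast]
  push_cast [ZMod.natCast_val, ZMod.cast_id]
  rfl

lemma add_self (a : Fin n → ZMod 2) : a + a = 0 :=
  funext fun i => CharTwo.add_self_eq_zero (a i)

/-- The shift `X^a : |v⟩ ↦ |a + v⟩`. -/
noncomputable def shift (a : Fin n → ZMod 2) : Matrix (Fin n → ZMod 2) (Fin n → ZMod 2) ℂ :=
  Matrix.of fun u v => if u = a + v then 1 else 0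

/-- The phase `Z^b : |v⟩ ↦ (-1)^(b·v) |v⟩`. -/
noncomputable def phase (b : Fin n → ZMod 2) : Matrix (Fin n → ZMod 2) (Fin n → ZMod 2) ℂ :=
  Matrix.diagonal fun v => sign (b ⬝ᵥ v)

lemma pauliOp_eq_smul (a b : Fin n → ZMod 2) :
    pauliOp n a b = Complex.I ^ (∑ i, (a i).val * (b i).val) • (shift a * phase b) := by
  ext u v
  simp only [pauliOp, shift, phase, Matrix.mul_diagonal, Matrix.smul_apply, Matrix.of_apply,
    neg_one_pow_sum_val, smul_eq_mul, mul_assoc]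

@[simp] lemma shift_zero : shift (0 : Fin n → ZMod 2) = 1 := by
  ext u v
  simp [shift, Matrix.one_apply]

@[simp] lemma phase_zero : phase (0 : Fin n → ZMod 2) = 1 := by
  simp [phase]

lemma shift_mul_shift (a a' : Fin n → ZMod 2) : shift a * shift a' = shift (a + a') := by
  ext u w
  simp [shift, Matrix.mul_apply, add_assoc]

lemma phase_mul_phase (b b' : Fin n → ZMod 2) : phase b * phase b' = phase (b + b') := by
  simp [phase, Matrix.diagonal_mul_diagonal, add_dotProduct, sign_add]

lemma phase_mul_shift (a b : Fin n → ZMod 2) :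
    phase b * shift a = sign (b ⬝ᵥ a) • (shift a * phase b) := by
  ext u w
  simp only [phase, shift, Matrix.diagonal_mul, Matrix.mul_diagonal, Matrix.of_apply,
    Matrix.smul_apply, smul_eq_mul]
  split_ifs with h
  · rw [h, dotProduct_add, sign_add]; ring
  · simp

@[simp] lemma conjTranspose_shift (a : Fin n → ZMod 2) : (shift a)ᴴ = shift a := by
  ext u v
  have h : ∀ u v : Fin n → ZMod 2, v = a + u → u = a + v := by
    rintro u v rfl
    rw [← add_assoc, add_self, zero_add]
  have hiff : v = a + u ↔ u = a + v := ⟨h u v, h v u⟩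
  simp only [shift, conjTranspose_apply, of_apply, hiff]
  split_ifs <;> simp

@[simp] lemma conjTranspose_phase (b : Fin n → ZMod 2) : (phase b)ᴴ = phase b := by
  simp [phase, Matrix.diagonal_conjTranspose]

lemma I_pow_mul_self (k : ℕ) : Complex.I ^ k * Complex.I ^ k = (-1) ^ k := by
  rw [← mul_pow, Complex.I_mul_I]

lemma star_I_pow (k : ℕ) : star (Complex.I ^ k) = (-1) ^ k * Complex.I ^ k := by
  rw [star_pow, Complex.star_def, Complex.conj_I, neg_pow]

lemma pauliOp_mul_pauliOp (a b a' b' : Fin n → ZMod 2) :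
    pauliOp n a b * pauliOp n a' b' =
      (Complex.I ^ (∑ i, (a i).val * (b i).val) * Complex.I ^ (∑ i, (a' i).val * (b' i).val) *
        sign (b ⬝ᵥ a')) • (shift (a + a') * phase (b + b')) := by
  rw [pauliOp_eq_smul, pauliOp_eq_smul, smul_mul_smul_comm, mul_assoc (shift a),
    ← mul_assoc (phase b), phase_mul_shift, smul_mul_assoc, mul_smul_comm, smul_smul,
    ← shift_mul_shift, ← phase_mul_phase]
  simp only [mul_assoc]

lemma isSelfAdjoint_pauliOp (a b : Fin n → ZMod 2) : IsSelfAdjoint (pauliOp n a b) := by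
  rw [IsSelfAdjoint, star_eq_conjTranspose, pauliOp_eq_smul, conjTranspose_smul,
    conjTranspose_mul, conjTranspose_shift, conjTranspose_phase, phase_mul_shift, smul_smul,
    star_I_pow, neg_one_pow_sum_val, mul_comm (sign _), mul_assoc, dotProduct_comm,
    sign_mul_self, mul_one]

lemma pauliOp_mul_self (a b : Fin n → ZMod 2) : pauliOp n a b * pauliOp n a b = 1 := by
  rw [pauliOp_mul_pauliOp, add_self, add_self, shift_zero, phase_zero, mul_one,
    I_pow_mul_self, neg_one_pow_sum_val, dotProduct_comm, sign_mul_self, one_smul]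

lemma pauliOp_mul_comm (a b a' b' : Fin n → ZMod 2) :
    pauliOp n a b * pauliOp n a' b' =
      sign (a ⬝ᵥ b' + b ⬝ᵥ a') • (pauliOp n a' b' * pauliOp n a b) := by
  rw [pauliOp_mul_pauliOp, pauliOp_mul_pauliOp, smul_smul, add_comm a', add_comm b',
    sign_add, dotProduct_comm a b']
  congr 1
  linear_combination -(Complex.I ^ (∑ i, (a i).val * (b i).val) *
    Complex.I ^ (∑ i, (a' i).val * (b' i).val) * sign (b ⬝ᵥ a')) * (sign_mul_self (b' ⬝ᵥ a))

lemma pauliExp_eq_inner (ψ : (Fin n → ZMod 2) → ℂ) (a b : Fin n → ZMod 2) :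
    pauliExp n ψ a b =
      inner ℂ (WithLp.toLp 2 ψ) (toEuclideanCLM (𝕜 := ℂ) (pauliOp n a b) (WithLp.toLp 2 ψ)) := by
  simp only [pauliExp, toEuclideanCLM_toLp, EuclideanSpace.inner_toLp_toLp, dotProduct, mulVec,
    Finset.sum_mul, Pi.star_apply, RCLike.star_def]
  exact Finset.sum_congr rfl fun u _ => Finset.sum_congr rfl fun v _ => by ring

theorem norm_pauliExp_sq_add_le {ψ : (Fin n → ZMod 2) → ℂ} (hψ : ∑ u, ‖ψ u‖ ^ 2 = 1)
    {a b a' b' : Fin n → ZMod 2} (h : a ⬝ᵥ b' + b ⬝ᵥ a' = 1) :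
    ‖pauliExp n ψ a b‖ ^ 2 + ‖pauliExp n ψ a' b'‖ ^ 2 ≤ 1 := by
  set T : (Fin n → ZMod 2) → (Fin n → ZMod 2) →
      Module.End ℂ (EuclideanSpace ℂ (Fin n → ZMod 2)) :=
    fun a b => toEuclideanCLM (𝕜 := ℂ) (pauliOp n a b)
  have hsymm (a b) : (T a b).IsSymmetric := ((isSelfAdjoint_pauliOp a b).map _).isSymmetric
  have hsq (a b) : T a b * T a b = 1 := by
    simp only [T, ← ContinuousLinearMap.toLinearMap_mul, ← map_mul, pauliOp_mul_self, map_one,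
      ContinuousLinearMap.toLinearMap_one]
  have hanti : T a b * T a' b' = -(T a' b' * T a b) := by
    simp only [T, ← ContinuousLinearMap.toLinearMap_mul, ← map_mul, pauliOp_mul_comm a b, h,
      sign_one, neg_one_smul, map_neg, ContinuousLinearMap.toLinearMap_neg]
  have hnorm : ‖WithLp.toLp 2 ψ‖ = 1 := by
    rw [EuclideanSpace.norm_eq]
    simpa using hψ
  rw [pauliExp_eq_inner, pauliExp_eq_inner]
  exact (hsymm a b).norm_inner_sq_add_norm_inner_sq_le_of_anticomm (hsymm a' b') (hsq a b)
    (hsq a' b') hanti hnorm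

theorem symplectic_eq_zero_of_mem_Mpsi {ψ : (Fin n → ZMod 2) → ℂ} (hψ : ∑ u, ‖ψ u‖ ^ 2 = 1)
    {x y : (Fin n → ZMod 2) × (Fin n → ZMod 2)} (hx : x ∈ Mpsi n ψ) (hy : y ∈ Mpsi n ψ) :
    x.1 ⬝ᵥ y.2 + x.2 ⬝ᵥ y.1 = 0 := by
  by_contra hne
  have := norm_pauliExp_sq_add_le hψ (Fin.eq_one_of_ne_zero _ hne)
  linarith [hx.out, hy.out]

noncomputable def symplecticForm (n : ℕ) :
    LinearMap.BilinForm (ZMod 2) ((Fin n → ZMod 2) × (Fin n → ZMod 2)) :=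
  (dotProductBilin (ZMod 2) (ZMod 2)).compl₁₂ (LinearMap.fst _ _ _) (LinearMap.snd _ _ _) +
    (dotProductBilin (ZMod 2) (ZMod 2)).compl₁₂ (LinearMap.snd _ _ _) (LinearMap.fst _ _ _)

lemma symplecticForm_apply (x y : (Fin n → ZMod 2) × (Fin n → ZMod 2)) :
    symplecticForm n x y = x.1 ⬝ᵥ y.2 + x.2 ⬝ᵥ y.1 := rfl

lemma symplecticForm_nondegenerate (n : ℕ) : (symplecticForm n).Nondegenerate := by
  have hrefl : (symplecticForm n).IsRefl := fun x y h => by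
    rwa [symplecticForm_apply, add_comm, dotProduct_comm, dotProduct_comm y.1]
  refine hrefl.nondegenerate_iff_separatingLeft.mpr ?_
  intro x hx
  ext i
  · simpa [symplecticForm_apply] using hx (0, Pi.single i 1)
  · simpa [symplecticForm_apply] using hx (Pi.single i 1, 0)

end Pauli

theorem stmt_16 (n : ℕ) (ψ : (Fin n → ZMod 2) → ℂ)
    (hψ : ∑ x, ‖ψ x‖ ^ 2 = 1) :
    (∀ x ∈ Mpsi n ψ, ∀ y ∈ Mpsi n ψ,
      (∑ i, x.1 i * y.2 i) + (∑ i, x.2 i * y.1 i) = 0) ∧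
    Nat.card (Mpsi n ψ) ≤ 2 ^ n := by
  have hiso : ∀ x ∈ Mpsi n ψ, ∀ y ∈ Mpsi n ψ, x.1 ⬝ᵥ y.2 + x.2 ⬝ᵥ y.1 = 0 :=
    fun x hx y hy => Pauli.symplectic_eq_zero_of_mem_Mpsi hψ hx hy
  refine ⟨hiso, ?_⟩
  have hcard := LinearMap.BilinForm.natCard_le_of_isotropic
    (Pauli.symplecticForm_nondegenerate n) hiso
  rwa [Module.finrank_prod, Module.finrank_fin_fun, ZMod.card, ← two_mul,
    Nat.mul_div_cancel_left _ two_pos] at hcard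
end
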